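/- arXiv:1806.08138 — 3 statements merged into one kernel-verified Lean document; each statement's English description precedes it below -/
import Mathlib

section
/- Let α < −2, λ > 0, m₀ ≠ 0, and set T* = artanh(−1/(α+1)) / λ (which is a positive real number). Then there is no twice-differentiable function m : ℝ → ℝ satisfying m''(t) = λ² m(t) for all t ∈ [0, T*], m(0) = m₀, and λ(α+1) m(T*) = −m'(T*). -/
/-- The inverse hyperbolic tangent on `(-1,1)`:
`arctanh x = (1/2) log((1+x)/(1-x))`. -/
noncomputable def arctanh (x : ℝ) : ℝ := Real.log ((1 + x) / (1 - x)) / 2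

/-- Non-existence for the boundary value problem (3.5) at the critical horizon
`T* = arctanh(-1/(α+1))/λ`: for `α < -2` and `m₀ ≠ 0` there is no twice
differentiable `m` with `m'' = λ²m` on `[0,T*]`, `m(0) = m₀` and
`λ(α+1) m(T*) = -m'(T*)`. -/
theorem bvp_nonexistence_at_critical_horizon
    (α l m₀ : ℝ) (hα : α < -2) (hl : 0 < l) (hm₀ : m₀ ≠ 0) :
    ¬ ∃ m : ℝ → ℝ,
      Differentiable ℝ m ∧ Differentiable ℝ (deriv m) ∧
      (∀ t ∈ Set.Icc (0 : ℝ) (arctanh (-1 / (α + 1)) / l),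
        deriv (deriv m) t = l ^ 2 * m t) ∧
      m 0 = m₀ ∧
      l * (α + 1) * m (arctanh (-1 / (α + 1)) / l)
        = -(deriv m (arctanh (-1 / (α + 1)) / l)) := by
  rintro ⟨m, hm1, hm2, hode, hm0, hbc⟩
  have ha1 : α + 1 < -1 := by linarith
  have ha0 : α + 1 ≠ 0 := by linarith
  have ha2 : α + 2 ≠ 0 := by linarith
  set x : ℝ := -1 / (α + 1) with hxdef
  have hx0 : 0 < x := by
    rw [hxdef, div_pos_iff]; right; constructor <;> linarith
  have hx1 : x < 1 := by
    rw [hxdef, div_lt_iff_of_neg (by linarith : α + 1 < 0)]; linarith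
  set s : ℝ := arctanh x with hsdef
  set T : ℝ := s / l with hTdef
  have hr1 : (1 : ℝ) < (1 + x) / (1 - x) :=
    (one_lt_div (by linarith)).2 (by linarith)
  have hs0 : 0 < s := by
    rw [hsdef]; unfold arctanh
    have := Real.log_pos hr1
    linarith
  have hT0 : 0 < T := div_pos hs0 hl
  have hlT : l * T = s := by rw [hTdef, mul_div_assoc']; exact mul_div_cancel_left₀ s (ne_of_gt hl)
  set u : ℝ := Real.exp s with hudef
  have hu0 : 0 < u := Real.exp_pos s
  have hu2 : u ^ 2 = (1 + x) / (1 - x) := by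
    rw [hudef, ← Real.exp_nat_mul]
    rw [show ((2 : ℕ) : ℝ) * s = Real.log ((1 + x) / (1 - x)) by
      rw [hsdef]; unfold arctanh; ring]
    exact Real.exp_log (by linarith)
  have hu2' : u ^ 2 * (α + 2) = α := by
    have h1x : (1 : ℝ) - x ≠ 0 := by linarith
    have hnum : (1 + x) * (α + 2) = α * (1 - x) := by
      rw [hxdef, div_eq_mul_inv]; have hinv := mul_inv_cancel₀ ha0; linear_combination (-2) * hinv
    calc u ^ 2 * (α + 2) = (1 + x) / (1 - x) * (α + 2) := by rw [hu2]
      _ = α * (1 - x) / (1 - x) := by rw [div_mul_eq_mul_div, hnum]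
      _ = α := by rw [mul_div_assoc, div_self h1x, mul_one]
  -- the key identity: (α+1) sinh s + cosh s = 0
  have key : (α + 1) * Real.sinh s + Real.cosh s = 0 := by
    rw [Real.sinh_eq, Real.cosh_eq, Real.exp_neg, ← hudef]
    field_simp
    linear_combination hu2'
  have hcosh : 0 < Real.cosh s := Real.cosh_pos s
  -- comparison solution F and its derivatives
  set F : ℝ → ℝ := fun t => Real.cosh (l * (t - T)) - (α + 1) * Real.sinh (l * (t - T))
    with hFdef
  set F' : ℝ → ℝ := fun t =>
      l * Real.sinh (l * (t - T)) - (α + 1) * (l * Real.cosh (l * (t - T))) with hF'def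
  have hinner : ∀ t : ℝ, HasDerivAt (fun y => l * (y - T)) l t := by
    intro t
    simpa using ((hasDerivAt_id t).sub_const T).const_mul l
  have hF : ∀ t : ℝ, HasDerivAt F (F' t) t := by
    intro t
    have h1 := (Real.hasDerivAt_cosh (l * (t - T))).comp t (hinner t)
    have h2 := ((Real.hasDerivAt_sinh (l * (t - T))).comp t (hinner t)).const_mul (α + 1)
    have := h1.sub h2
    exact this.congr_deriv (by
      show _ = l * Real.sinh (l * (t - T)) - (α + 1) * (l * Real.cosh (l * (t - T))); ring)
  have hF' : ∀ t : ℝ, HasDerivAt F' (l ^ 2 * F t) t := by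
    intro t
    have h1 := ((Real.hasDerivAt_sinh (l * (t - T))).comp t (hinner t)).const_mul l
    have h2 := (((Real.hasDerivAt_cosh (l * (t - T))).comp t (hinner t)).const_mul l).const_mul
      (α + 1)
    have := h1.sub h2
    exact this.congr_deriv (by
      show _ = l ^ 2 * (Real.cosh (l * (t - T)) - (α + 1) * Real.sinh (l * (t - T))); ring)
  -- the Wronskian W is constant on [0, T]
  set W : ℝ → ℝ := fun t => deriv m t * F t - m t * F' t with hWdef
  have hWder : ∀ t ∈ Set.Icc (0 : ℝ) T, HasDerivAt W 0 t := by
    intro t ht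
    have hmt : HasDerivAt m (deriv m t) t := (hm1 t).hasDerivAt
    have hmt' : HasDerivAt (deriv m) (deriv (deriv m) t) t := (hm2 t).hasDerivAt
    have h := (hmt'.mul (hF t)).sub (hmt.mul (hF' t))
    have hodet : deriv (deriv m) t = l ^ 2 * m t := hode t ht
    exact h.congr_deriv (by rw [hodet]; ring)
  have hWcont : ContinuousOn W (Set.Icc 0 T) := by
    apply Continuous.continuousOn
    have hFd : Differentiable ℝ F := fun t => (hF t).differentiableAt
    have hF'd : Differentiable ℝ F' := fun t => (hF' t).differentiableAt
    exact (hm2.continuous.mul hFd.continuous).sub (hm1.continuous.mul hF'd.continuous)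
  obtain ⟨c, hc, hc'⟩ := exists_hasDerivAt_eq_slope W (fun _ => 0) hT0 hWcont
    (fun t ht => hWder t ⟨le_of_lt ht.1, le_of_lt ht.2⟩)
  have hWT0 : W T = W 0 := by
    have hT0' : T - 0 ≠ 0 := by linarith
    field_simp at hc'
    linarith [hc'.symm]
  -- evaluate W at T
  have hFT : F T = 1 := by simp [hFdef]
  have hF'T : F' T = -((α + 1) * l) := by simp [hF'def]
  have hIccT : T ∈ Set.Icc (0 : ℝ) T := ⟨le_of_lt hT0, le_refl T⟩
  have hWT : W T = 0 := by
    have hbc' : l * (α + 1) * m T = -(deriv m T) := hbc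
    simp only [hWdef, hFT, hF'T]
    linarith [hbc']
  -- evaluate W at 0
  have hF0 : F 0 = 0 := by
    have : l * (0 - T) = -s := by rw [mul_sub, hlT]; ring
    simp only [hFdef, this, Real.cosh_neg, Real.sinh_neg]
    linarith [key]
  have hF'0 : F' 0 = -(l * Real.sinh s) - (α + 1) * (l * Real.cosh s) := by
    have : l * (0 - T) = -s := by rw [mul_sub, hlT]; ring
    simp only [hF'def, this, Real.cosh_neg, Real.sinh_neg]
    ring
  have hF'0ne : F' 0 ≠ 0 := by
    rw [hF'0]
    intro h
    have hl' : l ≠ 0 := ne_of_gt hl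
    have hsinh0 : l * (Real.sinh s + (α + 1) * Real.cosh s) = 0 := by linear_combination -h
    have hsinh : Real.sinh s + (α + 1) * Real.cosh s = 0 :=
      (mul_eq_zero.1 hsinh0).resolve_left hl'
    have h2 : ((α + 1) ^ 2 - 1) * Real.cosh s = 0 := by
      linear_combination (α + 1) * hsinh - key
    have hfac : 0 < (α + 1) ^ 2 - 1 := by nlinarith
    nlinarith [mul_pos hfac hcosh]
  have hW0 : W 0 = 0 := by rw [← hWT0]; exact hWT
  have : m₀ * F' 0 = 0 := by
    have := hW0
    simp only [hWdef, hF0, hm0] at this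
    linarith
  exact hF'0ne (by
    rcases mul_eq_zero.1 this with h | h
    · exact absurd h hm₀
    · exact h)
end

section
/- Let α < −2, λ > 0, m₀ ≠ 0, and set T* = artanh(−1/(α+1)) / λ. Then there is no pair of differentiable functions u, m : ℝ → ℝ satisfying u'(t) = λ u(t) and m'(t) = −λ m(t) − λ u(t) for all t ∈ [0, T*], together with m(0) = m₀ and u(T*) = α m(T*). -/
/-- Non-existence for the Fourier-mode backward-forward system (3.4) at the
critical horizon `T* = arctanh(-1/(α+1))/λ`: for `α < -2` and `m₀ ≠ 0` there
is no pair `(u,m)` with `u' = λu`, `m' = -λm - λu` on `[0,T*]`, `m(0) = m₀`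
and `u(T*) = α m(T*)`. -/
theorem mode_system_nonexistence_at_critical_horizon
    (α l m₀ : ℝ) (hα : α < -2) (hl : 0 < l) (hm₀ : m₀ ≠ 0) :
    ¬ ∃ u m : ℝ → ℝ,
      Differentiable ℝ u ∧ Differentiable ℝ m ∧
      (∀ t ∈ Set.Icc (0 : ℝ) (arctanh (-1 / (α + 1)) / l),
        deriv u t = l * u t ∧ deriv m t = -l * m t - l * u t) ∧
      m 0 = m₀ ∧
      u (arctanh (-1 / (α + 1)) / l) = α * m (arctanh (-1 / (α + 1)) / l) := by
  rintro ⟨u, m, hu, hm, hode, hm0, hfin⟩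
  have hα1 : α + 1 < 0 := by linarith
  have hα2 : α + 2 < 0 := by linarith
  have hα1' : α + 1 ≠ 0 := ne_of_lt hα1
  have hα2' : α + 2 ≠ 0 := ne_of_lt hα2
  have hαneg : α < 0 := by linarith
  have hr : (0:ℝ) < α / (α + 2) := div_pos_of_neg_of_neg hαneg hα2
  have hr1 : (1:ℝ) < α / (α + 2) := by
    rw [one_lt_div_of_neg hα2]; linarith
  set T : ℝ := arctanh (-1 / (α + 1)) / l with hTdef
  have harg : (1 + (-1 / (α + 1))) / (1 - (-1 / (α + 1))) = α / (α + 2) := by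
    have hnum : 1 + (-1 / (α + 1)) = α / (α + 1) := by field_simp; ring
    have hden : 1 - (-1 / (α + 1)) = (α + 2) / (α + 1) := by field_simp; ring
    rw [hnum, hden, div_div_div_eq]; field_simp
  have hA : arctanh (-1 / (α + 1)) = Real.log (α / (α + 2)) / 2 := by
    rw [arctanh, harg]
  have hlT : l * T = Real.log (α / (α + 2)) / 2 := by
    rw [hTdef, hA]; field_simp
  have hT0 : 0 ≤ T := by
    have hlog : 0 ≤ Real.log (α / (α + 2)) := Real.log_nonneg hr1.le
    rw [hTdef, hA]; positivity
  set E : ℝ := Real.exp (l * T) with hEdef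
  have hEpos : 0 < E := Real.exp_pos _
  have hE2 : E ^ 2 = α / (α + 2) := by
    rw [hEdef, ← Real.exp_nat_mul]
    rw [hlT]
    rw [show (2:ℕ) * (Real.log (α / (α + 2)) / 2) = Real.log (α / (α + 2)) by push_cast; ring]
    exact Real.exp_log hr
  -- F t = u t * exp (-(l*t)) is constant on [0,T]
  have hF : ∀ x ∈ Set.Icc (0:ℝ) T,
      u x * Real.exp (-(l * x)) = u 0 * Real.exp (-(l * 0)) := by
    apply constant_of_has_deriv_right_zero
    · exact (hu.continuous.mul (Real.continuous_exp.comp (continuous_const.mul continuous_id).neg)).continuousOn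
    · intro x hx
      have hx' : x ∈ Set.Icc (0:ℝ) T := ⟨hx.1, hx.2.le⟩
      have hux : HasDerivAt u (l * u x) x := by
        have := (hu x).hasDerivAt
        rwa [(hode x hx').1] at this
      have hex : HasDerivAt (fun t => Real.exp (-(l * t))) (-l * Real.exp (-(l * x))) x := by
        have h1 : HasDerivAt (fun t : ℝ => -(l * t)) (-l) x := by
          have h2 := ((hasDerivAt_id x).const_mul l).neg
          simp only [mul_one] at h2
          exact h2
        simpa [mul_comm] using h1.exp
      have := hux.mul hex
      have h0 : l * u x * Real.exp (-(l * x)) + u x * (-l * Real.exp (-(l * x))) = 0 := by ring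
      rw [h0] at this
      exact this.hasDerivWithinAt
  -- G t = (m t + u t / 2) * exp (l*t) is constant on [0,T]
  have hG : ∀ x ∈ Set.Icc (0:ℝ) T,
      (m x + u x / 2) * Real.exp (l * x) = (m 0 + u 0 / 2) * Real.exp (l * 0) := by
    apply constant_of_has_deriv_right_zero
    · exact ((hm.continuous.add (hu.continuous.div_const 2)).mul
        (Real.continuous_exp.comp (continuous_const.mul continuous_id))).continuousOn
    · intro x hx
      have hx' : x ∈ Set.Icc (0:ℝ) T := ⟨hx.1, hx.2.le⟩
      have hux : HasDerivAt u (l * u x) x := by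
        have := (hu x).hasDerivAt
        rwa [(hode x hx').1] at this
      have hmx : HasDerivAt m (-l * m x - l * u x) x := by
        have := (hm x).hasDerivAt
        rwa [(hode x hx').2] at this
      have hsum : HasDerivAt (fun t => m t + u t / 2)
          ((-l * m x - l * u x) + (l * u x) / 2) x := hmx.add (hux.div_const 2)
      have hex : HasDerivAt (fun t => Real.exp (l * t)) (l * Real.exp (l * x)) x := by
        have h1 : HasDerivAt (fun t : ℝ => l * t) l x := by
          simpa using (hasDerivAt_id x).const_mul l
        simpa [mul_comm] using h1.exp
      have := hsum.mul hex
      have h0 : ((-l * m x - l * u x) + (l * u x) / 2) * Real.exp (l * x)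
          + (m x + u x / 2) * (l * Real.exp (l * x)) = 0 := by ring
      rw [h0] at this
      exact this.hasDerivWithinAt
  have hTmem : T ∈ Set.Icc (0:ℝ) T := ⟨hT0, le_refl _⟩
  have e1 : u T * Real.exp (-(l * T)) = u 0 := by
    have := hF T hTmem; simpa using this
  have e1' : u T = u 0 * E := by
    have h := e1
    rw [Real.exp_neg, ← hEdef] at h
    field_simp at h
    linarith [h]
  have e2 : (m T + u T / 2) * E = m 0 + u 0 / 2 := by
    have := hG T hTmem; simpa [hEdef] using this
  have e4 : E ^ 2 * (α + 2) = α := by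
    rw [hE2]; field_simp
  have key : α * (m₀ * E) = 0 := by
    rw [← hm0]
    linear_combination (u T) / 2 * e4 - E ^ 2 * hfin + α / 2 * e1' - α * E * e2
  have : m₀ * E = 0 := by
    rcases mul_eq_zero.mp key with h | h
    · exact absurd h (ne_of_lt hαneg)
    · exact h
  rcases mul_eq_zero.mp this with h | h
  · exact hm₀ h
  · exact absurd h (ne_of_gt hEpos)
end

section
/- Let α < −2 and let k ≥ 1 be an integer; set λ_k = 4π²k² and T_k = artanh(−1/(α+1)) / λ_k > 0. Then there is no pair of functions u, m : ℝ × [0, T_k] → ℝ, each 1-periodic in the first variable and continuous together with their partial derivatives ∂_t, ∂_x, ∂_{xx} on ℝ × [0, T_k], satisfying −∂_t u − ∂_{xx} u = 0 and ∂_t m − ∂_{xx} m = ∂_{xx} u on ℝ × (0, T_k), with u(x, T_k) = α m(x, T_k) and m(x, 0) = cos(2πk x) for all x ∈ ℝ. Moreover T_k → 0 as k → ∞, so for every T̄ > 0 there is a horizon T ∈ (0, T̄] at which the system with some smooth initial datum m₀ is unsolvable. -/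
open Real Filter
open MeasureTheory Set intervalIntegral Topology

/-- The critical horizon `T_k = arctanh(-1/(α+1)) / λ_k` associated with the
Laplace eigenvalue `λ_k = 4π²k²` on the one-dimensional torus. -/
noncomputable def Tcrit (α : ℝ) (k : ℕ) : ℝ :=
  arctanh (-1 / (α + 1)) / (4 * Real.pi ^ 2 * (k : ℝ) ^ 2)

lemma ratio_eq {α : ℝ} (hα : α < -2) :
    (1 + (-1 / (α + 1))) / (1 - (-1 / (α + 1))) = α / (α + 2) := by
  have h1 : α + 1 ≠ 0 := by linarith
  have h2 : α + 2 ≠ 0 := by linarith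
  have h3 : α + 1 + 1 ≠ 0 := by linarith
  field_simp
  rw [div_eq_iff (by intro h; linarith : α + 1 - -1 ≠ 0)]
  ring

lemma ratio_gt_one {α : ℝ} (hα : α < -2) : 1 < α / (α + 2) := by
  rw [lt_div_iff_of_neg (by linarith : α + 2 < 0)]
  linarith

lemma arctanh_pos {α : ℝ} (hα : α < -2) : 0 < arctanh (-1 / (α + 1)) := by
  unfold arctanh
  rw [ratio_eq hα]
  exact div_pos (Real.log_pos (ratio_gt_one hα)) two_pos

lemma Tcrit_pos {α : ℝ} (hα : α < -2) {k : ℕ} (hk : 1 ≤ k) : 0 < Tcrit α k := by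
  have hk' : (0:ℝ) < (k:ℝ) := by exact_mod_cast hk
  exact div_pos (arctanh_pos hα) (by positivity)

lemma exp_id {α : ℝ} (hα : α < -2) {k : ℕ} (hk : 1 ≤ k) :
    Real.exp (2 * (4 * Real.pi ^ 2 * (k:ℝ) ^ 2) * Tcrit α k) = α / (α + 2) := by
  have hk' : (0:ℝ) < (k:ℝ) := by exact_mod_cast hk
  have hlam : (4 * Real.pi ^ 2 * (k:ℝ) ^ 2) ≠ 0 := by positivity
  have h1 : 2 * (4 * Real.pi ^ 2 * (k:ℝ) ^ 2) * Tcrit α k = Real.log (α / (α + 2)) := by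
    unfold Tcrit
    rw [show 2 * (4 * Real.pi ^ 2 * (k:ℝ) ^ 2) * (arctanh (-1 / (α + 1)) / (4 * Real.pi ^ 2 * (k:ℝ) ^ 2)) = arctanh (-1 / (α + 1)) * 2 by field_simp,
      show arctanh (-1 / (α + 1)) * 2 = Real.log ((1 + (-1 / (α + 1))) / (1 - (-1 / (α + 1)))) by
      unfold arctanh; ring, ratio_eq hα]
  rw [h1, Real.exp_log]
  have := ratio_gt_one hα
  linarith

lemma cos_sq_integral {k : ℕ} (hk : 1 ≤ k) :
    ∫ x in (0:ℝ)..1, Real.cos (2 * Real.pi * (k:ℝ) * x) * Real.cos (2 * Real.pi * (k:ℝ) * x)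
      = 1 / 2 := by
  have hk' : (0:ℝ) < (k:ℝ) := by exact_mod_cast hk
  have hω : (2 * Real.pi * (k:ℝ)) ≠ 0 := by positivity
  have h1 : ∀ x : ℝ, Real.cos (2 * Real.pi * (k:ℝ) * x) * Real.cos (2 * Real.pi * (k:ℝ) * x)
      = (fun u => Real.cos u ^ 2) (2 * Real.pi * (k:ℝ) * x) := by intro x; simp [sq]
  rw [intervalIntegral.integral_congr (fun x _ => h1 x),
    intervalIntegral.integral_comp_mul_left (fun u => Real.cos u ^ 2) hω]
  rw [integral_cos_sq]
  have hs : Real.sin (2 * Real.pi * (k:ℝ) * 1) = 0 := by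
    have h2 : (2 * Real.pi * (k:ℝ) * 1) = ((2*k : ℕ) : ℝ) * Real.pi := by push_cast; ring
    rw [h2]; exact Real.sin_nat_mul_pi (2*k)
  rw [hs]
  norm_num
  field_simp


lemma deriv_periodic {f d : ℝ → ℝ} (hper : ∀ x, f (x + 1) = f x)
    (hd : ∀ x, HasDerivAt f (d x) x) (x : ℝ) : d (x + 1) = d x := by
  have h1 : HasDerivAt (fun y => f (y + 1)) (d (x + 1) * 1) x :=
    (hd (x + 1)).comp x ((hasDerivAt_id x).add_const 1)
  have h2 : (fun y => f (y + 1)) = f := funext hper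
  rw [h2, mul_one] at h1
  exact h1.unique (hd x)

lemma contx {g : ℝ → ℝ → ℝ} {T : ℝ}
    (h : ContinuousOn (fun q : ℝ × ℝ => g q.1 q.2) (univ ×ˢ Icc 0 T))
    {t : ℝ} (ht : t ∈ Icc (0:ℝ) T) : Continuous fun x => g x t := by
  rw [← continuousOn_univ]
  exact h.comp (Continuous.continuousOn (continuous_id.prodMk continuous_const))
    fun x _ => ⟨trivial, ht⟩

lemma contt {g : ℝ → ℝ → ℝ} {T : ℝ}
    (h : ContinuousOn (fun q : ℝ × ℝ => g q.1 q.2) (univ ×ˢ Icc 0 T))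
    (x : ℝ) : ContinuousOn (fun t => g x t) (Icc (0:ℝ) T) :=
  h.comp (Continuous.continuousOn (continuous_const.prodMk continuous_id))
    fun t ht => ⟨trivial, ht⟩

lemma cont_param {g : ℝ → ℝ → ℝ} {T : ℝ} (hT : 0 ≤ T)
    (h : ContinuousOn (fun q : ℝ × ℝ => g q.1 q.2) (univ ×ˢ Icc 0 T))
    {c : ℝ → ℝ} (hc : Continuous c) :
    ContinuousOn (fun t => ∫ x in (0:ℝ)..1, g x t * c x) (Icc (0:ℝ) T) := by
  obtain ⟨M, hM⟩ := ((isCompact_Icc (a := (0:ℝ)) (b := 1)).prod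
      (isCompact_Icc (a := (0:ℝ)) (b := T))).exists_bound_of_continuousOn
    (h.mono (prod_mono (subset_univ _) subset_rfl))
  obtain ⟨Mc, hMc⟩ := (isCompact_Icc (a := (0:ℝ)) (b := 1)).exists_bound_of_continuousOn
    hc.continuousOn
  have key : ContinuousOn (fun t => ∫ x in Ioc (0:ℝ) 1, g x t * c x) (Icc (0:ℝ) T) := by
    apply MeasureTheory.continuousOn_of_dominated (bound := fun _ => |M| * |Mc|)
    · intro t ht
      exact ((contx h ht).mul hc).aestronglyMeasurable
    · intro t ht
      rw [ae_restrict_iff' measurableSet_Ioc]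
      refine ae_of_all _ fun x hx => ?_
      have h1 : ‖g x t‖ ≤ M := hM (x, t) ⟨Ioc_subset_Icc_self hx, ht⟩
      have h2 : ‖c x‖ ≤ Mc := hMc x (Ioc_subset_Icc_self hx)
      have := mul_le_mul (h1.trans (le_abs_self M)) (h2.trans (le_abs_self Mc))
        (norm_nonneg _) (abs_nonneg _)
      simpa [abs_mul] using this
    · exact integrable_const _
    · exact ae_of_all _ fun x => (contt h x).mul continuousOn_const
  refine key.congr fun t _ => ?_
  rw [intervalIntegral.integral_of_le (by norm_num : (0:ℝ) ≤ 1)]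

lemma parts {k : ℕ} {w wx wxx : ℝ → ℝ}
    (hper : ∀ x, w (x + 1) = w x)
    (hd1 : ∀ x, HasDerivAt w (wx x) x) (hd2 : ∀ x, HasDerivAt wx (wxx x) x)
    (hw2 : Continuous wxx) :
    ∫ x in (0:ℝ)..1, wxx x * Real.cos (2 * Real.pi * (k:ℝ) * x)
      = -(4 * Real.pi ^ 2 * (k:ℝ) ^ 2) * ∫ x in (0:ℝ)..1, w x * Real.cos (2 * Real.pi * (k:ℝ) * x) := by
  set ω : ℝ := 2 * Real.pi * (k:ℝ) with hω
  have hw0 : Continuous w := continuous_iff_continuousAt.2 fun x => (hd1 x).continuousAt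
  have hw1 : Continuous wx := continuous_iff_continuousAt.2 fun x => (hd2 x).continuousAt
  have hxper : ∀ x, wx (x + 1) = wx x := deriv_periodic hper hd1
  -- derivative of F
  have hF : ∀ x : ℝ, HasDerivAt (fun y => wx y * Real.cos (ω * y) + ω * (w y * Real.sin (ω * y)))
      (wxx x * Real.cos (ω * x) + ω ^ 2 * (w x * Real.cos (ω * x))) x := by
    intro x
    have hc : HasDerivAt (fun y : ℝ => Real.cos (ω * y)) (-Real.sin (ω * x) * ω) x := by
      simpa using ((hasDerivAt_id x).const_mul ω).cos
    have hs : HasDerivAt (fun y : ℝ => Real.sin (ω * y)) (Real.cos (ω * x) * ω) x := by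
      simpa using ((hasDerivAt_id x).const_mul ω).sin
    have h1 := (hd2 x).mul hc
    have h2 := (((hd1 x).mul hs).const_mul ω)
    convert h1.add h2 using 1
    any_goals rfl
    ring
  have hFval : wx 1 * Real.cos (ω * 1) + ω * (w 1 * Real.sin (ω * 1))
      = wx 0 * Real.cos (ω * 0) + ω * (w 0 * Real.sin (ω * 0)) := by
    have hcos : Real.cos (ω * 1) = 1 := by
      rw [show ω * 1 = (k:ℝ) * (2 * Real.pi) by rw [hω]; ring]
      exact_mod_cast Real.cos_nat_mul_two_pi k
    have hsin : Real.sin (ω * 1) = 0 := by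
      rw [show ω * 1 = ((2 * k : ℕ) : ℝ) * Real.pi by push_cast; rw [hω]; ring]
      exact Real.sin_nat_mul_pi (2 * k)
    simp only [hcos, hsin]
    rw [show (1:ℝ) = 0 + 1 by norm_num, hper 0, hxper 0]
    simp
  have hcc : Continuous fun x : ℝ => Real.cos (ω * x) :=
    Real.continuous_cos.comp (continuous_const.mul continuous_id)
  have hi1 : IntervalIntegrable (fun x => wxx x * Real.cos (ω * x)) volume 0 1 :=
    (hw2.mul hcc).intervalIntegrable 0 1
  have hi2 : IntervalIntegrable (fun x => ω ^ 2 * (w x * Real.cos (ω * x))) volume 0 1 :=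
    (continuous_const.mul (hw0.mul hcc)).intervalIntegrable 0 1
  have hint : ∫ x in (0:ℝ)..1,
      (wxx x * Real.cos (ω * x) + ω ^ 2 * (w x * Real.cos (ω * x))) = 0 := by
    rw [intervalIntegral.integral_eq_sub_of_hasDerivAt (fun x _ => hF x), hFval, sub_self]
    exact hi1.add hi2
  rw [intervalIntegral.integral_add hi1 hi2] at hint
  rw [intervalIntegral.integral_const_mul] at hint
  have : ω ^ 2 = 4 * Real.pi ^ 2 * (k:ℝ) ^ 2 := by rw [hω]; ring
  simp only [show ∀ x : ℝ, ω * x = 2 * Real.pi * (k:ℝ) * x from fun x => rfl] at hint ⊢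
  rw [this] at hint
  linarith

lemma integral_eq {T : ℝ} {w wt : ℝ → ℝ → ℝ}
    (hcw : ContinuousOn (fun q : ℝ × ℝ => w q.1 q.2) (univ ×ˢ Icc 0 T))
    (hcwt : ContinuousOn (fun q : ℝ × ℝ => wt q.1 q.2) (univ ×ˢ Icc 0 T))
    (hd : ∀ x : ℝ, ∀ t ∈ Icc (0:ℝ) T, HasDerivWithinAt (fun s => w x s) (wt x t) (Icc (0:ℝ) T) t)
    {c : ℝ → ℝ} (hc : Continuous c) {t : ℝ} (ht : t ∈ Icc (0:ℝ) T) :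
    (∫ x in (0:ℝ)..1, w x t * c x) - ∫ x in (0:ℝ)..1, w x 0 * c x
      = ∫ τ in (0:ℝ)..t, ∫ x in (0:ℝ)..1, wt x τ * c x := by
  have h0T : (0:ℝ) ≤ T := le_trans ht.1 ht.2
  have hIccsub : Icc (0:ℝ) t ⊆ Icc (0:ℝ) T := Icc_subset_Icc le_rfl ht.2
  -- FTC in time for each x
  have ftc : ∀ x : ℝ, w x t - w x 0 = ∫ τ in (0:ℝ)..t, wt x τ := by
    intro x
    rw [intervalIntegral.integral_eq_sub_of_hasDeriv_right_of_le ht.1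
      (((contt hcw x)).mono hIccsub)
      (fun τ hτ => (((hd x τ ⟨hτ.1.le, hτ.2.le.trans ht.2⟩).hasDerivAt
        (Icc_mem_nhds hτ.1 (lt_of_lt_of_le hτ.2 ht.2))).hasDerivWithinAt))
      (ContinuousOn.intervalIntegrable (by rw [uIcc_of_le ht.1]; exact (contt hcwt x).mono hIccsub))]
  -- integrability of the two-variable integrand on the rectangle
  have hrect : IntegrableOn (fun q : ℝ × ℝ => wt q.1 q.2 * c q.1)
      ((Ioc (0:ℝ) 1) ×ˢ (Ioc (0:ℝ) t)) (volume.prod volume) := by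
    have hcont2 : ContinuousOn (fun q : ℝ × ℝ => wt q.1 q.2 * c q.1)
        ((Icc (0:ℝ) 1) ×ˢ (Icc (0:ℝ) t)) :=
      (hcwt.mono (prod_mono (subset_univ _) hIccsub)).mul
        ((hc.comp continuous_fst).continuousOn)
    exact (hcont2.integrableOn_compact (isCompact_Icc.prod isCompact_Icc)).mono_set
      (prod_mono Ioc_subset_Icc_self Ioc_subset_Icc_self)
  -- LHS rewriting
  have hi1 : IntervalIntegrable (fun x => w x t * c x) volume 0 1 :=
    ((contx hcw ht).mul hc).intervalIntegrable 0 1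
  have hi0 : IntervalIntegrable (fun x => w x 0 * c x) volume 0 1 :=
    ((contx hcw (left_mem_Icc.2 h0T)).mul hc).intervalIntegrable 0 1
  rw [← intervalIntegral.integral_sub hi1 hi0]
  have step1 : ∀ x : ℝ, w x t * c x - w x 0 * c x = ∫ τ in (0:ℝ)..t, wt x τ * c x := by
    intro x
    rw [intervalIntegral.integral_mul_const, ← ftc x]
    ring
  rw [intervalIntegral.integral_congr (fun x _ => step1 x)]
  -- Fubini
  rw [intervalIntegral.integral_of_le (by norm_num : (0:ℝ) ≤ 1),
    intervalIntegral.integral_of_le ht.1]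
  simp_rw [intervalIntegral.integral_of_le ht.1,
    intervalIntegral.integral_of_le (by norm_num : (0:ℝ) ≤ 1)]
  have hrect' : Integrable (Function.uncurry (fun x τ : ℝ => wt x τ * c x))
      ((volume.restrict (Ioc (0:ℝ) 1)).prod (volume.restrict (Ioc (0:ℝ) t))) := by
    rw [Measure.prod_restrict]; exact hrect
  exact MeasureTheory.integral_integral_swap hrect'

lemma lscMemIci {T t : ℝ} (ht : t ∈ Ico (0:ℝ) T) :
    Icc (0:ℝ) T ∈ 𝓝[Ici t] t := by
  refine mem_nhdsWithin.2 ⟨Iio T, isOpen_Iio, ht.2, fun y hy => ⟨le_trans ht.1 hy.2, le_of_lt hy.1⟩⟩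

lemma lscMemIoi {T t : ℝ} (ht : t ∈ Ico (0:ℝ) T) :
    Icc (0:ℝ) T ∈ 𝓝[Ioi t] t := by
  refine mem_nhdsWithin.2 ⟨Iio T, isOpen_Iio, ht.2, fun y hy => ⟨le_trans ht.1 (le_of_lt hy.2), le_of_lt hy.1⟩⟩

lemma primitive_deriv {T : ℝ} {h : ℝ → ℝ} (hcont : ContinuousOn h (Icc (0:ℝ) T))
    {t : ℝ} (ht : t ∈ Ico (0:ℝ) T) :
    HasDerivWithinAt (fun s => ∫ τ in (0:ℝ)..s, h τ) (h t) (Ici t) t := by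
  have htIcc : t ∈ Icc (0:ℝ) T := ⟨ht.1, ht.2.le⟩
  refine intervalIntegral.integral_hasDerivWithinAt_right (t := Ioi t)
    (ContinuousOn.intervalIntegrable (by
      rw [uIcc_of_le ht.1]
      exact hcont.mono (Icc_subset_Icc le_rfl ht.2.le)))
    ⟨Icc (0:ℝ) T, lscMemIoi ht, hcont.aestronglyMeasurable measurableSet_Icc⟩
    (((hcont t htIcc)).mono_of_mem_nhdsWithin (lscMemIoi ht))

lemma no_solution (α : ℝ) (hα : α < -2) (k : ℕ) (hk : 1 ≤ k) :
    ¬ ∃ u m ut mt ux mx uxx mxx : ℝ → ℝ → ℝ,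
        (∀ x t : ℝ, u (x + 1) t = u x t) ∧
        (∀ x t : ℝ, m (x + 1) t = m x t) ∧
        (∀ x : ℝ, ∀ t ∈ Set.Icc (0 : ℝ) (Tcrit α k),
          HasDerivWithinAt (fun s => u x s) (ut x t) (Set.Icc (0 : ℝ) (Tcrit α k)) t ∧
          HasDerivWithinAt (fun s => m x s) (mt x t) (Set.Icc (0 : ℝ) (Tcrit α k)) t ∧
          HasDerivAt (fun y => u y t) (ux x t) x ∧
          HasDerivAt (fun y => m y t) (mx x t) x ∧
          HasDerivAt (fun y => ux y t) (uxx x t) x ∧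
          HasDerivAt (fun y => mx y t) (mxx x t) x) ∧
        (∀ g ∈ ({u, m, ut, mt, ux, mx, uxx, mxx} : Set (ℝ → ℝ → ℝ)),
          ContinuousOn (fun q : ℝ × ℝ => g q.1 q.2)
            (Set.univ ×ˢ Set.Icc (0 : ℝ) (Tcrit α k))) ∧
        (∀ x : ℝ, ∀ t ∈ Set.Ioo (0 : ℝ) (Tcrit α k),
          -(ut x t) - uxx x t = 0 ∧ mt x t - mxx x t = uxx x t) ∧
        (∀ x : ℝ, u x (Tcrit α k) = α * m x (Tcrit α k)) ∧
        (∀ x : ℝ, m x 0 = Real.cos (2 * Real.pi * (k : ℝ) * x)) := by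
  rintro ⟨u, m, ut, mt, ux, mx, uxx, mxx, hpu, hpm, hder, hcont, hpde, hfin, hini⟩
  set T : ℝ := Tcrit α k with hTdef
  have hT : 0 < T := Tcrit_pos hα hk
  set lam : ℝ := 4 * Real.pi ^ 2 * (k:ℝ) ^ 2 with hlamdef
  set c : ℝ → ℝ := fun x => Real.cos (2 * Real.pi * (k:ℝ) * x) with hcdef
  have hc : Continuous c :=
    Real.continuous_cos.comp (continuous_const.mul continuous_id)
  have hcu := hcont u (by simp)
  have hcm := hcont m (by simp)
  have hcut := hcont ut (by simp)
  have hcmt := hcont mt (by simp)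
  have hcuxx := hcont uxx (by simp)
  have hcmxx := hcont mxx (by simp)
  set a : ℝ → ℝ := fun t => ∫ x in (0:ℝ)..1, u x t * c x with hadef
  set b : ℝ → ℝ := fun t => ∫ x in (0:ℝ)..1, m x t * c x with hbdef
  have hacont : ContinuousOn a (Icc (0:ℝ) T) := cont_param hT.le hcu hc
  have hbcont : ContinuousOn b (Icc (0:ℝ) T) := cont_param hT.le hcm hc
  -- pointwise projections of the second-space-derivative integrals
  have hparts_u : ∀ τ ∈ Icc (0:ℝ) T,
      ∫ x in (0:ℝ)..1, uxx x τ * c x = -lam * a τ := fun τ hτ =>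
    parts (fun x => hpu x τ) (fun x => (hder x τ hτ).2.2.1)
      (fun x => (hder x τ hτ).2.2.2.2.1) (contx hcuxx hτ)
  have hparts_m : ∀ τ ∈ Icc (0:ℝ) T,
      ∫ x in (0:ℝ)..1, mxx x τ * c x = -lam * b τ := fun τ hτ =>
    parts (fun x => hpm x τ) (fun x => (hder x τ hτ).2.2.2.1)
      (fun x => (hder x τ hτ).2.2.2.2.2) (contx hcmxx hτ)
  have hsingae : ∀ t : ℝ, ∀ᵐ τ : ℝ, τ ≠ t := by
    intro t
    rw [ae_iff]
    simpa [not_not] using measure_singleton (α := ℝ) (μ := volume) t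
  -- the integral equation for a
  have haa : ∀ t ∈ Icc (0:ℝ) T, a t = a 0 + ∫ τ in (0:ℝ)..t, lam * a τ := by
    intro t ht
    have h1 := integral_eq hcu hcut (fun x s hs => (hder x s hs).1) hc ht
    have h2 : ∀ᵐ τ : ℝ, τ ∈ Set.uIoc (0:ℝ) t →
        (∫ x in (0:ℝ)..1, ut x τ * c x) = lam * a τ := by
      filter_upwards [hsingae t] with τ hne hmem
      rw [uIoc_of_le ht.1] at hmem
      have hτ : τ ∈ Ioo (0:ℝ) T :=
        ⟨hmem.1, lt_of_lt_of_le (lt_of_le_of_ne hmem.2 hne) ht.2⟩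
      have hτIcc : τ ∈ Icc (0:ℝ) T := ⟨hτ.1.le, hτ.2.le⟩
      have heq : ∀ x : ℝ, ut x τ * c x = -(uxx x τ * c x) := by
        intro x
        have h' : ut x τ = -uxx x τ := by have := (hpde x τ hτ).1; linarith
        rw [h']; ring
      rw [intervalIntegral.integral_congr (fun x _ => heq x),
        intervalIntegral.integral_neg, hparts_u τ hτIcc]
      ring
    rw [intervalIntegral.integral_congr_ae h2] at h1
    linarith [h1]
  -- the integral equation for b
  have hbb : ∀ t ∈ Icc (0:ℝ) T,
      b t = b 0 + ∫ τ in (0:ℝ)..t, (-(lam * b τ) - lam * a τ) := by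
    intro t ht
    have h1 := integral_eq hcm hcmt (fun x s hs => (hder x s hs).2.1) hc ht
    have h2 : ∀ᵐ τ : ℝ, τ ∈ Set.uIoc (0:ℝ) t →
        (∫ x in (0:ℝ)..1, mt x τ * c x) = -(lam * b τ) - lam * a τ := by
      filter_upwards [hsingae t] with τ hne hmem
      rw [uIoc_of_le ht.1] at hmem
      have hτ : τ ∈ Ioo (0:ℝ) T :=
        ⟨hmem.1, lt_of_lt_of_le (lt_of_le_of_ne hmem.2 hne) ht.2⟩
      have hτIcc : τ ∈ Icc (0:ℝ) T := ⟨hτ.1.le, hτ.2.le⟩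
      have heq : ∀ x : ℝ, mt x τ * c x = mxx x τ * c x + uxx x τ * c x := by
        intro x
        have h' : mt x τ = mxx x τ + uxx x τ := by have := (hpde x τ hτ).2; linarith
        rw [h']; ring
      have hi1 : IntervalIntegrable (fun x => mxx x τ * c x) volume 0 1 :=
        ((contx hcmxx hτIcc).mul hc).intervalIntegrable 0 1
      have hi2 : IntervalIntegrable (fun x => uxx x τ * c x) volume 0 1 :=
        ((contx hcuxx hτIcc).mul hc).intervalIntegrable 0 1
      rw [intervalIntegral.integral_congr (fun x _ => heq x),
        intervalIntegral.integral_add hi1 hi2, hparts_m τ hτIcc, hparts_u τ hτIcc]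
      ring
    rw [intervalIntegral.integral_congr_ae h2] at h1
    linarith [h1]
  -- right derivatives of a and b
  have hlamacont : ContinuousOn (fun τ => lam * a τ) (Icc (0:ℝ) T) :=
    continuousOn_const.mul hacont
  have hbintcont : ContinuousOn (fun τ => -(lam * b τ) - lam * a τ) (Icc (0:ℝ) T) :=
    ((continuousOn_const.mul hbcont).neg).sub hlamacont
  have hda : ∀ t ∈ Ico (0:ℝ) T, HasDerivWithinAt a (lam * a t) (Ici t) t := by
    intro t ht
    have hF : HasDerivWithinAt (fun s => a 0 + ∫ τ in (0:ℝ)..s, lam * a τ)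
        (lam * a t) (Ici t) t := (primitive_deriv hlamacont ht).const_add (a 0)
    refine hF.congr_of_eventuallyEq ?_ (haa t ⟨ht.1, ht.2.le⟩)
    filter_upwards [lscMemIci ht] with s hs using haa s hs
  have hdb : ∀ t ∈ Ico (0:ℝ) T,
      HasDerivWithinAt b (-(lam * b t) - lam * a t) (Ici t) t := by
    intro t ht
    have hF : HasDerivWithinAt (fun s => b 0 + ∫ τ in (0:ℝ)..s, (-(lam * b τ) - lam * a τ))
        (-(lam * b t) - lam * a t) (Ici t) t := (primitive_deriv hbintcont ht).const_add (b 0)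
    refine hF.congr_of_eventuallyEq ?_ (hbb t ⟨ht.1, ht.2.le⟩)
    filter_upwards [lscMemIci ht] with s hs using hbb s hs
  -- a t = a 0 * exp (lam * t)
  have hgconst : ∀ t ∈ Icc (0:ℝ) T, a t * Real.exp (-lam * t) = a 0 := by
    have := constant_of_has_deriv_right_zero
      (f := fun t => a t * Real.exp (-lam * t)) (a := (0:ℝ)) (b := T)
      (hacont.mul (Real.continuous_exp.comp (continuous_const.mul continuous_id)).continuousOn)
      (fun t ht => by
        have hexp : HasDerivAt (fun s : ℝ => Real.exp (-lam * s))
            (Real.exp (-lam * t) * (-lam * 1)) t := ((hasDerivAt_id t).const_mul (-lam)).exp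
        have h := (hda t ht).mul hexp.hasDerivWithinAt
        convert h using 1
        any_goals rfl
        ring)
    intro t ht
    have h0 := this t ht
    simpa using h0
  have ha_exp : ∀ t ∈ Icc (0:ℝ) T, a t = a 0 * Real.exp (lam * t) := by
    intro t ht
    have h := hgconst t ht
    have hpos := Real.exp_pos (lam * t)
    have hneg : Real.exp (-lam * t) = (Real.exp (lam * t))⁻¹ := by
      rw [← Real.exp_neg]; ring_nf
    rw [hneg] at h
    field_simp at h
    linarith [h]
  -- the conserved quantity for b
  have hhconst : ∀ t ∈ Icc (0:ℝ) T,
      b t * Real.exp (lam * t) + a 0 / 2 * Real.exp (2 * lam * t)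
        = b 0 + a 0 / 2 := by
    have := constant_of_has_deriv_right_zero
      (f := fun t => b t * Real.exp (lam * t) + a 0 / 2 * Real.exp (2 * lam * t))
      (a := (0:ℝ)) (b := T)
      ((hbcont.mul (Real.continuous_exp.comp (continuous_const.mul continuous_id)).continuousOn).add
        (continuousOn_const.mul
          (Real.continuous_exp.comp (continuous_const.mul continuous_id)).continuousOn))
      (fun t ht => by
        have hexp1 : HasDerivAt (fun s : ℝ => Real.exp (lam * s))
            (Real.exp (lam * t) * (lam * 1)) t := ((hasDerivAt_id t).const_mul lam).exp
        have hexp2 : HasDerivAt (fun s : ℝ => Real.exp (2 * lam * s))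
            (Real.exp (2 * lam * t) * (2 * lam * 1)) t :=
          ((hasDerivAt_id t).const_mul (2 * lam)).exp
        have h := ((hdb t ht).mul hexp1.hasDerivWithinAt).add
          (hexp2.hasDerivWithinAt.const_mul (a 0 / 2))
        convert h using 1
        any_goals rfl
        have ha' : a t = a 0 * Real.exp (lam * t) := ha_exp t ⟨ht.1, ht.2.le⟩
        have he2 : Real.exp (2 * lam * t) = Real.exp (lam * t) * Real.exp (lam * t) := by
          rw [← Real.exp_add]; ring_nf
        rw [ha', he2]
        ring)
    intro t ht
    have h0 := this t ht
    simpa using h0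
  -- endpoint values
  have hb0 : b 0 = 1 / 2 := by
    have heq : ∀ x : ℝ, m x 0 * c x
        = Real.cos (2 * Real.pi * (k:ℝ) * x) * Real.cos (2 * Real.pi * (k:ℝ) * x) := by
      intro x; rw [hcdef]; simp only; rw [hini x]
    rw [hbdef]
    simp only
    rw [intervalIntegral.integral_congr (fun x _ => heq x)]
    exact cos_sq_integral hk
  have haT : a T = α * b T := by
    have heq : ∀ x : ℝ, u x T * c x = α * (m x T * c x) := by
      intro x; rw [hfin x]; ring
    rw [hadef, hbdef]
    simp only
    rw [intervalIntegral.integral_congr (fun x _ => heq x),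
      intervalIntegral.integral_const_mul]
  -- final algebra
  have hTmem : T ∈ Icc (0:ℝ) T := right_mem_Icc.2 hT.le
  set P : ℝ := Real.exp (lam * T) with hPdef
  set S : ℝ := Real.exp (2 * lam * T) with hSdef
  have hPP : P * P = S := by rw [hPdef, hSdef, ← Real.exp_add]; ring_nf
  have hS : S * (α + 2) = α := by
    have h := exp_id hα hk (k := k)
    rw [hSdef, hlamdef, hTdef]
    rw [show (2 : ℝ) * (4 * Real.pi ^ 2 * (k:ℝ) ^ 2) * Tcrit α k
        = 2 * (4 * Real.pi ^ 2 * (k:ℝ) ^ 2) * Tcrit α k from rfl] at h ⊢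
    rw [h]
    exact div_mul_cancel₀ α (by linarith)
  have h1 : α * b T = a 0 * P := by rw [← haT]; exact ha_exp T hTmem
  have h2 : b T * P + a 0 / 2 * S = 1 / 2 + a 0 / 2 := by
    have := hhconst T hTmem
    rw [hb0] at this
    linarith [this]
  have hzero : α = 0 := by
    linear_combination (-2* α) * h2 + 2 * P * h1 + 2 * (a 0) * hPP + (a 0) * hS
  linarith

lemma tcrit_tendsto (α : ℝ) : Tendsto (fun k : ℕ => Tcrit α k) atTop (nhds 0) := by
  have h1 : Tendsto (fun k : ℕ => (4 * Real.pi ^ 2 * (k:ℝ) ^ 2)) atTop atTop := by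
    apply Tendsto.const_mul_atTop (by positivity : (0:ℝ) < 4 * Real.pi ^ 2)
    exact (tendsto_pow_atTop (two_ne_zero)).comp tendsto_natCast_atTop_atTop
  exact tendsto_const_nhds.div_atTop h1


/-- Counterexample of Section 3.1 (`N = 1`): for `α < -2` the linear
backward-forward system `-u_t - u_xx = 0`, `m_t - m_xx = u_xx` with
non-regularizing final coupling `u(·,T_k) = α m(·,T_k)` and initial datum
`m(·,0) = cos(2πk·)` has no regular 1-periodic solution on `ℝ × [0,T_k]`;
moreover `T_k → 0`, so for every `T̄ > 0` some horizon `T_k ∈ (0,T̄]` is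
non-solvable. -/
theorem linear_system_counterexample (α : ℝ) (hα : α < -2) :
    (∀ k : ℕ, 1 ≤ k →
      ¬ ∃ u m ut mt ux mx uxx mxx : ℝ → ℝ → ℝ,
        -- 1-periodicity in the first (space) variable
        (∀ x t : ℝ, u (x + 1) t = u x t) ∧
        (∀ x t : ℝ, m (x + 1) t = m x t) ∧
        -- existence of the partial derivatives on ℝ × [0, T_k]
        (∀ x : ℝ, ∀ t ∈ Set.Icc (0 : ℝ) (Tcrit α k),
          HasDerivWithinAt (fun s => u x s) (ut x t) (Set.Icc (0 : ℝ) (Tcrit α k)) t ∧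
          HasDerivWithinAt (fun s => m x s) (mt x t) (Set.Icc (0 : ℝ) (Tcrit α k)) t ∧
          HasDerivAt (fun y => u y t) (ux x t) x ∧
          HasDerivAt (fun y => m y t) (mx x t) x ∧
          HasDerivAt (fun y => ux y t) (uxx x t) x ∧
          HasDerivAt (fun y => mx y t) (mxx x t) x) ∧
        -- continuity of u, m and of their partial derivatives on ℝ × [0, T_k]
        (∀ g ∈ ({u, m, ut, mt, ux, mx, uxx, mxx} : Set (ℝ → ℝ → ℝ)),
          ContinuousOn (fun q : ℝ × ℝ => g q.1 q.2)
            (Set.univ ×ˢ Set.Icc (0 : ℝ) (Tcrit α k))) ∧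
        -- the PDEs on ℝ × (0, T_k)
        (∀ x : ℝ, ∀ t ∈ Set.Ioo (0 : ℝ) (Tcrit α k),
          -(ut x t) - uxx x t = 0 ∧ mt x t - mxx x t = uxx x t) ∧
        -- final coupling and initial datum
        (∀ x : ℝ, u x (Tcrit α k) = α * m x (Tcrit α k)) ∧
        (∀ x : ℝ, m x 0 = Real.cos (2 * Real.pi * (k : ℝ) * x))) ∧
    Tendsto (fun k : ℕ => Tcrit α k) atTop (nhds 0) ∧
    (∀ Tbar : ℝ, 0 < Tbar → ∃ k : ℕ, 1 ≤ k ∧ Tcrit α k ∈ Set.Ioc 0 Tbar) := by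
  refine ⟨fun k hk => no_solution α hα k hk, tcrit_tendsto α, fun Tbar hTbar => ?_⟩
  have h1 : ∀ᶠ k : ℕ in atTop, Tcrit α k < Tbar :=
    (tcrit_tendsto α).eventually (Filter.Tendsto.eventually_lt_const hTbar tendsto_id)
  obtain ⟨k, hklt, hk1⟩ := (h1.and (eventually_ge_atTop 1)).exists
  exact ⟨k, hk1, ⟨Tcrit_pos hα hk1, hklt.le⟩⟩
end
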